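/- For every integer n ≥ 1, there exists an FSA A = (Σ, Q, q0, {f_σ}, O, β) with |Q| = n states over an input alphabet Σ with |Σ| = 3 symbols such that every divide-and-conquer automaton A' = (Σ, Q', α, c, O, β') with ν_{A'} = ν_A has |Q'| ≥ n^n states. -/

import Mathlib

/-- `fStar f w q` is `f_w(q)`: apply the transition functions of the characters
of `w` in order, starting from state `q` (with `f_ε = id`). -/
def fStar {S Q : Type} (f : S → Q → Q) (w : List S) (q : Q) : Q :=
  w.foldl (fun q a => f a q) q

/-- `Chi α c w q` says that `q ∈ χ_{A'}(w)` for the divide-and-conquer tuple with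
input function `α` and combining function `c`: for a single character `σ`,
`χ(σ) = {α σ}`; for longer words, `χ(w)` is the union over all partitions
`w = u ++ v` into two nonempty substrings of `{c (a, b) : a ∈ χ(u), b ∈ χ(v)}`. -/
inductive Chi {S Q' : Type} (α : S → Q') (c : Q' × Q' → Q') : List S → Q' → Prop
  | single (a : S) : Chi α c [a] (α a)
  | combine {u v : List S} {x y : Q'} :
      u ≠ [] → v ≠ [] → Chi α c u x → Chi α c v y → Chi α c (u ++ v) (c (x, y))

set_option maxHeartbeats 1000000

open Equiv Function

def permHom (n : ℕ) : Equiv.Perm (Fin n) →* Function.End (Fin n) where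
  toFun g := ⇑g
  map_one' := rfl
  map_mul' _ _ := rfl

def sigA (n : ℕ) : Function.End (Fin n) := ⇑(finRotate n)
def tauA (n : ℕ) [NeZero n] : Function.End (Fin n) := ⇑(Equiv.swap 0 1)
def eA (n : ℕ) [NeZero n] : Function.End (Fin n) := Function.update id 0 1
def MM (n : ℕ) [NeZero n] : Submonoid (Function.End (Fin n)) :=
  Submonoid.closure {sigA n, tauA n, eA n}

lemma coe_perm_mem (m : ℕ) (g : Equiv.Perm (Fin (m+2))) :
    permHom (m+2) g ∈ MM (m+2) := by
  have hσ1 : finRotate (m+2) (0 : Fin (m+2)) = 1 := by simp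
  have htop : Subgroup.closure ({finRotate (m+2), Equiv.swap (0 : Fin (m+2)) 1} :
      Set (Equiv.Perm (Fin (m+2)))) = ⊤ := by
    have := Equiv.Perm.closure_cycle_adjacent_swap (isCycle_finRotate (n := m))
      (support_finRotate (n := m)) (0 : Fin (m+2))
    rwa [hσ1] at this
  have hg : g ∈ Subgroup.closure ({finRotate (m+2), Equiv.swap (0 : Fin (m+2)) 1} :
      Set (Equiv.Perm (Fin (m+2)))) := htop ▸ Subgroup.mem_top g
  induction hg using Subgroup.closure_induction with
  | mem s hs =>
    rcases hs with h | h
    · subst h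
      exact Submonoid.subset_closure (Set.mem_insert _ _)
    · rw [Set.mem_singleton_iff] at h; subst h
      exact Submonoid.subset_closure (Set.mem_insert_of_mem _ (Set.mem_insert _ _))
  | one => rw [map_one]; exact (MM (m+2)).one_mem
  | mul a b _ _ ha hb => rw [map_mul]; exact (MM (m+2)).mul_mem ha hb
  | inv a _ ha =>
    have hpos : 0 < orderOf a := orderOf_pos a
    have h2 : a * a ^ (orderOf a - 1) = 1 := by
      rw [← pow_succ', Nat.sub_add_cancel hpos, pow_orderOf_eq_one]
    have h1 : a⁻¹ = a ^ (orderOf a - 1) := (eq_inv_of_mul_eq_one_right h2).symm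
    rw [h1, map_pow]
    exact (MM (m+2)).pow_mem ha _

lemma end_mem (m : ℕ) (g : Function.End (Fin (m+2))) : g ∈ MM (m+2) := by
  suffices H : ∀ k, ∀ g : Function.End (Fin (m+2)),
      (m+2) - (Finset.univ.image g).card ≤ k → g ∈ MM (m+2) by
    exact H (m+2) g (by omega)
  intro k
  induction k with
  | zero =>
    intro g hg
    have hcard : (Finset.univ.image g).card = m + 2 := by
      have := Finset.card_le_card (Finset.subset_univ (Finset.univ.image g))
      simp only [Finset.card_univ, Fintype.card_fin] at this
      omega
    have hsurj : Function.Surjective g := by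
      intro y
      have huniv : Finset.univ.image g = Finset.univ :=
        Finset.eq_univ_of_card _ (by simpa using hcard)
      have : y ∈ Finset.univ.image g := by rw [huniv]; exact Finset.mem_univ y
      obtain ⟨x, -, hx⟩ := Finset.mem_image.mp this
      exact ⟨x, hx⟩
    have hbij : Function.Bijective g := Finite.surjective_iff_bijective.mp hsurj
    have : g = permHom (m+2) (Equiv.ofBijective g hbij) := rfl
    rw [this]; exact coe_perm_mem m _
  | succ k ih =>
    intro g hg
    by_cases hinj : Function.Injective g
    · have hbij : Function.Bijective g := Finite.injective_iff_bijective.mp hinj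
      have : g = permHom (m+2) (Equiv.ofBijective g hbij) := rfl
      rw [this]; exact coe_perm_mem m _
    · obtain ⟨i, j, hgij, hij⟩ := Function.not_injective_iff.mp hinj
      -- b not in the image
      have hne : Finset.univ.image g ≠ Finset.univ := by
        intro h
        apply hinj
        apply Finite.injective_iff_surjective.mpr
        intro y
        have : y ∈ Finset.univ.image g := by rw [h]; exact Finset.mem_univ y
        obtain ⟨x, -, hx⟩ := Finset.mem_image.mp this
        exact ⟨x, hx⟩
      obtain ⟨b, hb⟩ : ∃ b, b ∉ Finset.univ.image g := by
        by_contra h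
        push_neg at h
        exact hne (Finset.eq_univ_iff_forall.mpr h)
      obtain ⟨a, ha⟩ : ∃ a, g i = a := ⟨g i, rfl⟩
      have hab : a ≠ b := by
        intro h
        apply hb
        rw [← h, ← ha]
        exact Finset.mem_image_of_mem g (Finset.mem_univ i)
      -- permutation π with π 0 = b, π 1 = a
      set s1 : Equiv.Perm (Fin (m+2)) := Equiv.swap 0 b with hs1
      have hs11 : s1 1 ≠ b := by
        rcases eq_or_ne b 1 with h | h
        · rw [hs1, h, Equiv.swap_apply_right]; simp [h]
        · rcases eq_or_ne b 0 with h0 | h0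
          · simp [hs1, h0, Ne.symm h]
          · rw [hs1, Equiv.swap_apply_of_ne_of_ne (by simp) (Ne.symm h)]
            exact Ne.symm h
      set π : Equiv.Perm (Fin (m+2)) := (Equiv.swap (s1 1) a) * s1 with hπ
      have hπ0 : π 0 = b := by
        have : s1 0 = b := Equiv.swap_apply_left 0 b
        simp only [hπ, Equiv.Perm.mul_apply, this]
        exact Equiv.swap_apply_of_ne_of_ne (Ne.symm hs11) (Ne.symm hab)
      have hπ1 : π 1 = a := by
        simp only [hπ, Equiv.Perm.mul_apply]
        exact Equiv.swap_apply_left _ _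
      -- the collapse map sending b to a, identity elsewhere
      set C : Function.End (Fin (m+2)) :=
        permHom (m+2) π * eA (m+2) * permHom (m+2) π⁻¹ with hC
      have hCmem : C ∈ MM (m+2) :=
        (MM (m+2)).mul_mem
          ((MM (m+2)).mul_mem (coe_perm_mem m π)
            (Submonoid.subset_closure (by right; right; rfl)))
          (coe_perm_mem m π⁻¹)
      have hCb : C b = a := by
        have h1 : π⁻¹ b = 0 := by rw [← hπ0]; simp
        show π (eA (m+2) (π⁻¹ b)) = a
        rw [h1]
        have : eA (m+2) 0 = 1 := Function.update_self _ _ _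
        rw [this, hπ1]
      have hCx : ∀ x, x ≠ b → C x = x := by
        intro x hx
        show π (eA (m+2) (π⁻¹ x)) = x
        have h1 : π⁻¹ x ≠ 0 := by
          intro h
          apply hx
          rw [← hπ0, ← h]; simp
        have : eA (m+2) (π⁻¹ x) = π⁻¹ x := Function.update_of_ne h1 _ _
        rw [this]; simp
      set f' : Function.End (Fin (m+2)) := Function.update g j b with hf'
      have hgC : g = C * f' := by
        funext x
        show g x = C (f' x)
        rcases eq_or_ne x j with h | h
        · have hfx : f' x = b := by rw [h]; exact Function.update_self _ _ _
          rw [hfx, hCb, h, ← hgij, ha]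
        · have h2 : f' x = g x := Function.update_of_ne h _ _
          have h3 : g x ≠ b := fun hh => hb (hh ▸ Finset.mem_image_of_mem g (Finset.mem_univ x))
          rw [h2, hCx _ h3]
      -- image of f' is insert b (image g)
      have himg : Finset.univ.image f' = insert b (Finset.univ.image g) := by
        have hf'app : ∀ x, f' x = if x = j then b else g x :=
          fun x => Function.update_apply g j b x
        ext y
        simp only [Finset.mem_image (f := f'), Finset.mem_image (f := g), Finset.mem_univ, true_and, Finset.mem_insert]
        constructor
        · rintro ⟨x, hx⟩
          rw [hf'app] at hx
          by_cases h : x = j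
          · rw [if_pos h] at hx; exact Or.inl hx.symm
          · rw [if_neg h] at hx; exact Or.inr ⟨x, hx⟩
        · rintro (rfl | ⟨x, hx⟩)
          · exact ⟨j, by rw [hf'app, if_pos rfl]⟩
          · by_cases h : x = j
            · exact ⟨i, by rw [hf'app, if_neg hij, hgij, ← h]; exact hx⟩
            · exact ⟨x, by rw [hf'app, if_neg h]; exact hx⟩
      have hcard' : (Finset.univ.image f').card = (Finset.univ.image g).card + 1 := by
        rw [himg, Finset.card_insert_of_notMem hb]
      have hf'mem : f' ∈ MM (m+2) := ih f' (by omega)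
      rw [hgC]
      exact (MM (m+2)).mul_mem hCmem hf'mem

lemma fStar_append {S Q : Type} (f : S → Q → Q) (u v : List S) (q : Q) :
    fStar f (u ++ v) q = fStar f v (fStar f u q) :=
  List.foldl_append

def F (m : ℕ) : Fin 3 → Fin (m+1) → Fin (m+1) := ![sigA (m+1), tauA (m+1), eA (m+1)]

lemma exists_word (m : ℕ) (g : Fin (m+1) → Fin (m+1)) :
    ∃ w : List (Fin 3), w ≠ [] ∧ fStar (F m) w = g := by
  match m with
  | 0 => exact ⟨[0], by simp, funext fun x => @Subsingleton.elim _ Fin.subsingleton_one _ _⟩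
  | Nat.succ k =>
    let S' : Submonoid (Function.End (Fin (k+2))) :=
      { carrier := {g : Function.End (Fin (k+2)) |
          ∃ w : List (Fin 3), w ≠ [] ∧ fStar (F (k+1)) w = g}
        mul_mem' := by
          rintro g h ⟨u, hu, rfl⟩ ⟨v, hv, rfl⟩
          refine ⟨v ++ u, by simp [hv], ?_⟩
          funext q
          show fStar (F (k+1)) (v ++ u) q = fStar (F (k+1)) u (fStar (F (k+1)) v q)
          exact fStar_append _ _ _ _
        one_mem' := by
          refine ⟨[1, 1], by simp, ?_⟩
          funext q
          show F (k+1) 1 (F (k+1) 1 q) = q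
          simp [F, tauA] }
    have hle : MM (k+2) ≤ S' := by
      rw [MM, Submonoid.closure_le]
      rintro x (rfl | rfl | rfl)
      · exact ⟨[0], by simp, funext fun q => by show F (k+1) 0 q = _; simp [F]⟩
      · exact ⟨[1], by simp, funext fun q => by show F (k+1) 1 q = _; simp [F]⟩
      · exact ⟨[2], by simp, funext fun q => by show F (k+1) 2 q = _; simp [F]⟩
    exact hle (end_mem k g)

/-- For every `n ≥ 1` there is an `n`-state FSA over a 3-symbol alphabet such
that every divide-and-conquer automaton computing the same function (i.e., for
every nonempty word `w`, `{β' q : q ∈ χ(w)}` equals the singleton `{ν_A(w)}`)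
has at least `n^n` states. -/
theorem stmt5 (n : ℕ) (hn : 1 ≤ n) :
    ∃ (O : Type) (_ : Fintype O) (f : Fin 3 → Fin n → Fin n) (q0 : Fin n) (β : Fin n → O),
      ∀ (Q' : Type) (instQ' : Fintype Q') (α : Fin 3 → Q') (c : Q' × Q' → Q')
        (β' : Q' → O),
        (∀ w : List (Fin 3), w ≠ [] →
          β' '' {q : Q' | Chi α c w q} = {β (fStar f w q0)}) →
        n ^ n ≤ @Fintype.card Q' instQ' := by
  obtain ⟨m, rfl⟩ : ∃ m, n = m + 1 := ⟨n - 1, by omega⟩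
  refine ⟨Fin (m+1), inferInstance, F m, 0, id, ?_⟩
  intro Q' instQ' α c β' h
  classical
  have key : ∀ w : List (Fin 3), w ≠ [] → ∀ q : Q', Chi α c w q →
      β' q = fStar (F m) w 0 := by
    intro w hw q hq
    have h2 : β' q ∈ β' '' {q : Q' | Chi α c w q} := ⟨q, hq, rfl⟩
    rw [h w hw] at h2
    simpa using h2
  choose wd hwne hwd using exists_word m
  have hchi : ∀ g : Fin (m+1) → Fin (m+1), ∃ q : Q', Chi α c (wd g) q := by
    intro g
    have h2 : (id (fStar (F m) (wd g) 0) : Fin (m+1)) ∈ β' '' {q : Q' | Chi α c (wd g) q} := by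
      rw [h (wd g) (hwne g)]; rfl
    obtain ⟨q, hq, -⟩ := h2
    exact ⟨q, hq⟩
  choose Φ hΦ using hchi
  have hinj : Function.Injective Φ := by
    intro g g' hq
    by_contra hgg
    obtain ⟨p, hp⟩ := Function.ne_iff.mp hgg
    have hfu : fStar (F m) (wd (Function.const (Fin (m+1)) p)) 0 = p := by
      rw [hwd]; rfl
    have hune : wd (Function.const (Fin (m+1)) p) ++ wd g ≠ [] := by
      simp [hwne]
    have hune' : wd (Function.const (Fin (m+1)) p) ++ wd g' ≠ [] := by
      simp [hwne]
    have c1 : Chi α c (wd (Function.const (Fin (m+1)) p) ++ wd g)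
        (c (Φ (Function.const (Fin (m+1)) p), Φ g)) :=
      Chi.combine (hwne _) (hwne _) (hΦ _) (hΦ _)
    have c2 : Chi α c (wd (Function.const (Fin (m+1)) p) ++ wd g')
        (c (Φ (Function.const (Fin (m+1)) p), Φ g')) :=
      Chi.combine (hwne _) (hwne _) (hΦ _) (hΦ _)
    have e1 := key _ hune _ c1
    have e2 := key _ hune' _ c2
    rw [fStar_append, hfu] at e1 e2
    rw [hq] at e1
    rw [e1] at e2
    have : g p = g' p := by
      rw [← congrFun (hwd g) p, ← congrFun (hwd g') p]
      exact e2
    exact hp this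
  have hle := @Fintype.card_le_of_injective _ Q' _ instQ' Φ hinj
  have hcard : Fintype.card (Fin (m+1) → Fin (m+1)) = (m+1)^(m+1) := by
    simp [Fintype.card_fun]
  rw [hcard] at hle
  exact hle
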